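/- arXiv:2002.00331 — 4 statements merged into one kernel-verified Lean document; each statement's English description precedes it below -/
import Mathlib

section
/- Let L, K be positive integers, α ≥ 0 and c > 0 real numbers, and Φ̂, Λ ∈ Matrix (Fin L) (Fin K) ℂ. Define g : Matrix (Fin L) (Fin K) ℂ → ℝ by g(W) = α·‖W‖_F + Re (Matrix.trace (Λᴴ * (W − Φ̂))) + (c/2)·‖W − Φ̂‖_F², and set Ξ = c • Φ̂ − Λ. If ‖Ξ‖_F ≤ α, then g(0) ≤ g(W) for every W ∈ Matrix (Fin L) (Fin K) ℂ. -/
/-!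
After vectorising matrices, `frobNorm` is the Euclidean norm and `Re Tr (Λᴴ W)` the real inner
product `⟪Λ, W⟫`. Expanding the square gives `g W - g 0 = α ‖W‖ - ⟪Ξ, W⟫ + c/2 ‖W‖²`, and
Cauchy–Schwarz together with `‖Ξ‖ ≤ α` makes this nonnegative.
-/

open Matrix
open scoped BigOperators

/-- The Frobenius norm of a complex matrix: `‖A‖_F = √(∑ i j, |A i j|²)`. -/
noncomputable def frobNorm {L K : ℕ} (A : Matrix (Fin L) (Fin K) ℂ) : ℝ :=
  Real.sqrt (∑ i, ∑ j, ‖A i j‖ ^ 2)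

section InnerProductSpace

variable {E : Type*} [NormedAddCommGroup E] [InnerProductSpace ℝ E]

open RealInnerProductSpace

noncomputable def augLagrangian (α c : ℝ) (φ μ w : E) : ℝ :=
  α * ‖w‖ + ⟪μ, w - φ⟫ + c / 2 * ‖w - φ‖ ^ 2

lemma augLagrangian_sub_augLagrangian_zero (α c : ℝ) (φ μ w : E) :
    augLagrangian α c φ μ w - augLagrangian α c φ μ 0 =
      α * ‖w‖ - ⟪c • φ - μ, w⟫ + c / 2 * ‖w‖ ^ 2 := by
  simp only [augLagrangian, zero_sub, norm_neg, norm_zero, inner_sub_right, inner_neg_right,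
    norm_sub_sq_real, inner_sub_left, real_inner_smul_left, real_inner_comm φ w]
  ring

lemma augLagrangian_zero_le {α c : ℝ} (hc : 0 ≤ c) {φ μ : E} (h : ‖c • φ - μ‖ ≤ α) (w : E) :
    augLagrangian α c φ μ 0 ≤ augLagrangian α c φ μ w := by
  have hcs : ⟪c • φ - μ, w⟫ ≤ α * ‖w‖ :=
    (real_inner_le_norm _ _).trans (mul_le_mul_of_nonneg_right h (norm_nonneg w))
  have := augLagrangian_sub_augLagrangian_zero α c φ μ w
  nlinarith [sq_nonneg ‖w‖]

end InnerProductSpace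

namespace Matrix

variable {m n : Type*}

noncomputable def toEuclideanVec : Matrix m n ℂ ≃ₗ[ℝ] EuclideanSpace ℂ (m × n) :=
  (LinearEquiv.curry ℝ ℂ m n).symm.trans (WithLp.linearEquiv 2 ℝ _).symm

@[simp] lemma toEuclideanVec_apply (A : Matrix m n ℂ) (p : m × n) :
    toEuclideanVec A p = A p.1 p.2 := rfl

lemma re_trace_conjTranspose_mul [Fintype m] [Fintype n] (A B : Matrix m n ℂ) :
    (trace (Aᴴ * B)).re = inner ℝ (toEuclideanVec A) (toEuclideanVec B) := by
  rw [PiLp.inner_apply, Fintype.sum_prod_type, Finset.sum_comm]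
  simp [trace, mul_apply, Complex.re_sum, Complex.inner, mul_comm]

end Matrix

lemma frobNorm_eq_norm {L K : ℕ} (A : Matrix (Fin L) (Fin K) ℂ) :
    frobNorm A = ‖Matrix.toEuclideanVec A‖ := by
  simp [frobNorm, EuclideanSpace.norm_eq, Fintype.sum_prod_type]

theorem stmt5_general (L K : ℕ) (α c : ℝ) (hc : 0 < c)
    (Φ Λ : Matrix (Fin L) (Fin K) ℂ)
    (g : Matrix (Fin L) (Fin K) ℂ → ℝ)
    (hg : ∀ W, g W = α * frobNorm W + (Matrix.trace (Λᴴ * (W - Φ))).re +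
      c / 2 * frobNorm (W - Φ) ^ 2)
    (Ξ : Matrix (Fin L) (Fin K) ℂ) (hΞ : Ξ = c • Φ - Λ)
    (h : frobNorm Ξ ≤ α) :
    ∀ W : Matrix (Fin L) (Fin K) ℂ, g 0 ≤ g W := by
  let v := Matrix.toEuclideanVec (m := Fin L) (n := Fin K)
  have hg_vec : ∀ W, g W = augLagrangian α c (v Φ) (v Λ) (v W) := fun W => by
    rw [hg, augLagrangian, frobNorm_eq_norm, frobNorm_eq_norm, Matrix.re_trace_conjTranspose_mul,
      map_sub]
  have hξ : ‖c • v Φ - v Λ‖ ≤ α := by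
    rwa [← map_smul, ← map_sub, ← hΞ, ← frobNorm_eq_norm]
  intro W
  simpa only [hg_vec, map_zero] using augLagrangian_zero_le hc.le hξ (v W)

theorem stmt5 (L K : ℕ) (hL : 0 < L) (hK : 0 < K) (α c : ℝ) (hα : 0 ≤ α) (hc : 0 < c)
    (Φ Λ : Matrix (Fin L) (Fin K) ℂ)
    (g : Matrix (Fin L) (Fin K) ℂ → ℝ)
    (hg : ∀ W, g W = α * frobNorm W + (Matrix.trace (Λᴴ * (W - Φ))).re +
      c / 2 * frobNorm (W - Φ) ^ 2)
    (Ξ : Matrix (Fin L) (Fin K) ℂ) (hΞ : Ξ = c • Φ - Λ)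
    (h : frobNorm Ξ ≤ α) :
    ∀ W : Matrix (Fin L) (Fin K) ℂ, g 0 ≤ g W :=
  stmt5_general L K α c hc Φ Λ g hg Ξ hΞ h
end

section
/- Let L, K be positive integers, α ≥ 0 and c > 0 real numbers, and Φ̂, Λ ∈ Matrix (Fin L) (Fin K) ℂ. Define g : Matrix (Fin L) (Fin K) ℂ → ℝ by g(W) = α·‖W‖_F + Re (Matrix.trace (Λᴴ * (W − Φ̂))) + (c/2)·‖W − Φ̂‖_F², and set Ξ = c • Φ̂ − Λ. If ‖Ξ‖_F > α, then W* = ((‖Ξ‖_F − α)/(c·‖Ξ‖_F)) • Ξ satisfies g(W*) ≤ g(W) for every W, with equality only when W = W*; i.e., W* is the unique global minimizer of g. -/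
open Matrix
open scoped BigOperators

/-!
Writing `f(w) = α‖w‖ + ⟪λ, w - φ⟫ + (c/2)‖w - φ‖²`, the quadratic part gives the exact identity
`f(w) - f(w⋆) - (c/2)‖w - w⋆‖² = α(‖w‖ - ‖w⋆‖) + ⟪λ + c(w⋆ - φ), w - w⋆⟫`.
For `w⋆ = ((‖ξ‖ - α)/(c‖ξ‖)) ξ` with `ξ = cφ - λ` one has `λ + c(w⋆ - φ) = -α u`, `u = ξ/‖ξ‖`,
and `‖w⋆‖ = ⟪u, w⋆⟫`, so the right-hand side is `α(‖w‖ - ⟪u, w⟫) ≥ 0` by Cauchy–Schwarz.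
Hence `f(w⋆) + (c/2)‖w - w⋆‖² ≤ f(w)`, which gives both minimality and uniqueness.
Matrices are flattened into `EuclideanSpace ℂ (Fin L × Fin K)`, where the Frobenius norm is the
Euclidean norm and `Re Tr(Aᴴ B)` is the real inner product.
-/

open scoped RealInnerProductSpace

section InnerProductSpace

variable {E : Type*} [NormedAddCommGroup E] [InnerProductSpace ℝ E]

noncomputable def groupLassoObjective (α c : ℝ) (φ l w : E) : ℝ :=
  α * ‖w‖ + ⟪l, w - φ⟫ + c / 2 * ‖w - φ‖ ^ 2

noncomputable def blockSoftThreshold (α c : ℝ) (ξ : E) : E :=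
  ((‖ξ‖ - α) / (c * ‖ξ‖)) • ξ

/-- The optimality condition `0 ∈ α ∂‖·‖(w⋆) + λ + c(w⋆ - φ)`, with `u` the subgradient of the
norm at `w⋆`, upgrades to a quadratic growth bound. -/
theorem groupLassoObjective_add_le_of_subgradient {α c : ℝ} (hα : 0 ≤ α) {φ l u wstar : E}
    (hu : ‖u‖ = 1) (hu_wstar : ⟪u, wstar⟫ = ‖wstar‖) (hopt : l + c • (wstar - φ) = -(α • u))
    (w : E) :
    groupLassoObjective α c φ l wstar + c / 2 * ‖w - wstar‖ ^ 2 ≤ groupLassoObjective α c φ l w := by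
  have hsq : ‖w - φ‖ ^ 2 = ‖w - wstar‖ ^ 2 + 2 * ⟪wstar - φ, w - wstar⟫ + ‖wstar - φ‖ ^ 2 := by
    rw [show w - φ = (w - wstar) + (wstar - φ) by abel, norm_add_sq_real, real_inner_comm]
  have hlin : ⟪l, w - φ⟫ = ⟪l, w - wstar⟫ + ⟪l, wstar - φ⟫ := by
    rw [← inner_add_right, sub_add_sub_cancel]
  have hgrad : ⟪l, w - wstar⟫ + c * ⟪wstar - φ, w - wstar⟫ = -α * (⟪u, w⟫ - ‖wstar‖) := by
    rw [← real_inner_smul_left, ← inner_add_left, hopt, inner_neg_left, real_inner_smul_left,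
      inner_sub_right, hu_wstar]
    ring
  have hCS : ⟪u, w⟫ ≤ ‖w‖ := by simpa [hu] using real_inner_le_norm u w
  unfold groupLassoObjective
  rw [hsq, hlin]
  linarith [mul_le_mul_of_nonneg_left hCS hα]

theorem groupLassoObjective_blockSoftThreshold_add_le {α c : ℝ} (hα : 0 ≤ α) (hc : 0 < c)
    {φ l ξ : E} (hξ : ξ = c • φ - l) (hα_lt : α < ‖ξ‖) (w : E) :
    groupLassoObjective α c φ l (blockSoftThreshold α c ξ) +
        c / 2 * ‖w - blockSoftThreshold α c ξ‖ ^ 2 ≤ groupLassoObjective α c φ l w := by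
  have hξ0 : ξ ≠ 0 := norm_pos_iff.mp (hα.trans_lt hα_lt)
  have ht : 0 ≤ (‖ξ‖ - α) / c := div_nonneg (by linarith) hc.le
  have hu : ‖‖ξ‖⁻¹ • ξ‖ = 1 := norm_smul_inv_norm hξ0
  have hwstar : blockSoftThreshold α c ξ = ((‖ξ‖ - α) / c) • ‖ξ‖⁻¹ • ξ := by
    rw [blockSoftThreshold, smul_smul]
    congr 1
    field_simp
  refine hwstar ▸ groupLassoObjective_add_le_of_subgradient hα hu ?_ ?_ w
  · rw [real_inner_smul_right, real_inner_self_eq_norm_sq, hu, norm_smul, hu,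
      Real.norm_of_nonneg ht]
    ring
  · have hl : l = c • φ - ξ := by rw [hξ]; abel
    have hξ_inv : ‖ξ‖ * ‖ξ‖⁻¹ = 1 := mul_inv_cancel₀ (norm_ne_zero_iff.mpr hξ0)
    have hct : c * ((‖ξ‖ - α) / c) = ‖ξ‖ - α := mul_div_cancel₀ _ hc.ne'
    rw [hl]
    linear_combination (norm := module) hct • ‖ξ‖⁻¹ • ξ + hξ_inv • ξ

theorem groupLassoObjective_blockSoftThreshold_isUniqueMin {α c : ℝ} (hα : 0 ≤ α) (hc : 0 < c)
    {φ l ξ : E} (hξ : ξ = c • φ - l) (hα_lt : α < ‖ξ‖) :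
    (∀ w, groupLassoObjective α c φ l (blockSoftThreshold α c ξ) ≤
        groupLassoObjective α c φ l w) ∧
      ∀ w, groupLassoObjective α c φ l w =
          groupLassoObjective α c φ l (blockSoftThreshold α c ξ) →
        w = blockSoftThreshold α c ξ := by
  have hgrowth := groupLassoObjective_blockSoftThreshold_add_le hα hc hξ hα_lt
  have hquad (w : E) : 0 ≤ ‖w - blockSoftThreshold α c ξ‖ ^ 2 := sq_nonneg _
  refine ⟨fun w => ?_, fun w hw => ?_⟩
  · nlinarith [hgrowth w, hquad w]
  · have hsq : ‖w - blockSoftThreshold α c ξ‖ ^ 2 = 0 := by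
      nlinarith [hgrowth w, hquad w]
    rwa [sq_eq_zero_iff, norm_eq_zero, sub_eq_zero] at hsq

end InnerProductSpace

section Frobenius

variable {m n : Type*}

def Matrix.toEuclidean (A : Matrix m n ℂ) : EuclideanSpace ℂ (m × n) :=
  WithLp.toLp 2 fun p => A p.1 p.2

theorem Matrix.toEuclidean_injective : Function.Injective (Matrix.toEuclidean (m := m) (n := n)) :=
  fun _ _ h => Matrix.ext fun i j => congrArg (fun v => v (i, j)) h

@[simp]
theorem Matrix.toEuclidean_sub (A B : Matrix m n ℂ) :
    (A - B).toEuclidean = A.toEuclidean - B.toEuclidean :=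
  rfl

@[simp]
theorem Matrix.toEuclidean_smul (r : ℝ) (A : Matrix m n ℂ) :
    (r • A).toEuclidean = r • A.toEuclidean :=
  rfl

theorem Matrix.re_trace_conjTranspose_mul_s6 [Fintype m] [Fintype n] (A B : Matrix m n ℂ) :
    (trace (Aᴴ * B)).re = ⟪A.toEuclidean, B.toEuclidean⟫ := by
  simp only [real_inner_eq_re_inner, PiLp.inner_apply, trace, diag_apply, mul_apply,
    conjTranspose_apply, Complex.re_sum, Fintype.sum_prod_type, Matrix.toEuclidean, mul_comm]
  exact Finset.sum_comm

end Frobenius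

theorem frobNorm_eq_norm_toEuclidean {L K : ℕ} (A : Matrix (Fin L) (Fin K) ℂ) :
    frobNorm A = ‖A.toEuclidean‖ := by
  rw [EuclideanSpace.norm_eq, frobNorm, Fintype.sum_prod_type]
  rfl

theorem stmt6_general (L K : ℕ) (α c : ℝ) (hα : 0 ≤ α) (hc : 0 < c)
    (Φ Λ : Matrix (Fin L) (Fin K) ℂ)
    (g : Matrix (Fin L) (Fin K) ℂ → ℝ)
    (hg : ∀ W, g W = α * frobNorm W + (Matrix.trace (Λᴴ * (W - Φ))).re +
      c / 2 * frobNorm (W - Φ) ^ 2)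
    (Ξ : Matrix (Fin L) (Fin K) ℂ) (hΞ : Ξ = c • Φ - Λ)
    (h : frobNorm Ξ > α)
    (Wstar : Matrix (Fin L) (Fin K) ℂ)
    (hWstar : Wstar = (((frobNorm Ξ - α) / (c * frobNorm Ξ) : ℝ)) • Ξ) :
    (∀ W : Matrix (Fin L) (Fin K) ℂ, g Wstar ≤ g W) ∧
      (∀ W : Matrix (Fin L) (Fin K) ℂ, g W = g Wstar → W = Wstar) := by
  have hgT : ∀ W, g W = groupLassoObjective α c Φ.toEuclidean Λ.toEuclidean W.toEuclidean := by
    intro W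
    rw [hg, groupLassoObjective, frobNorm_eq_norm_toEuclidean, frobNorm_eq_norm_toEuclidean,
      re_trace_conjTranspose_mul_s6, toEuclidean_sub]
  have hΞT : Ξ.toEuclidean = c • Φ.toEuclidean - Λ.toEuclidean := by
    rw [hΞ, toEuclidean_sub, toEuclidean_smul]
  have hWT : Wstar.toEuclidean = blockSoftThreshold α c Ξ.toEuclidean := by
    rw [hWstar, toEuclidean_smul, frobNorm_eq_norm_toEuclidean, blockSoftThreshold]
  rw [frobNorm_eq_norm_toEuclidean] at h
  obtain ⟨hmin, huniq⟩ := groupLassoObjective_blockSoftThreshold_isUniqueMin hα hc hΞT h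
  refine ⟨fun W => ?_, fun W hW => toEuclidean_injective ?_⟩
  · rw [hgT, hgT, hWT]
    exact hmin _
  · rw [hgT, hgT, hWT] at hW
    rw [hWT]
    exact huniq _ hW

theorem stmt6 (L K : ℕ) (hL : 0 < L) (hK : 0 < K) (α c : ℝ) (hα : 0 ≤ α) (hc : 0 < c)
    (Φ Λ : Matrix (Fin L) (Fin K) ℂ)
    (g : Matrix (Fin L) (Fin K) ℂ → ℝ)
    (hg : ∀ W, g W = α * frobNorm W + (Matrix.trace (Λᴴ * (W - Φ))).re +
      c / 2 * frobNorm (W - Φ) ^ 2)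
    (Ξ : Matrix (Fin L) (Fin K) ℂ) (hΞ : Ξ = c • Φ - Λ)
    (h : frobNorm Ξ > α)
    (Wstar : Matrix (Fin L) (Fin K) ℂ)
    (hWstar : Wstar = (((frobNorm Ξ - α) / (c * frobNorm Ξ) : ℝ)) • Ξ) :
    (∀ W : Matrix (Fin L) (Fin K) ℂ, g Wstar ≤ g W) ∧
      (∀ W : Matrix (Fin L) (Fin K) ℂ, g W = g Wstar → W = Wstar) :=
  stmt6_general L K α c hα hc Φ Λ g hg Ξ hΞ h Wstar hWstar
end

section
/- Let K be a positive integer, γ > 0 and c > 0 real numbers, b₀, ψ₀ ∈ ℝ, and b', ψ' ∈ EuclideanSpace ℂ (Fin K). Define F : ℝ × EuclideanSpace ℂ (Fin K) → ℝ by F(t, v) = ψ₀·(t − b₀) + Re ⟪ψ', v − b'⟫ + (c/2)·((t − b₀)² + ‖v − b'‖²), and the second-order cone C = {(t, v) : ‖v‖ ≤ t / Real.sqrt γ}. If ‖c • b' − ψ'‖ ≤ (c·b₀ − ψ₀) / Real.sqrt γ, then the point (t*, v*) = ((c·b₀ − ψ₀)/c, c⁻¹ • (c • b' − ψ')) lies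 in C and satisfies F(t*, v*) ≤ F(t, v) for every (t, v) ∈ C. -/
/-!
Expanding the squares, `F` is, up to an additive constant, `c / 2` times the squared distance
from `(b₀ - ψ₀ / c, b' - c⁻¹ • ψ')`, which is the proposed point. So that point is the unconstrained
minimiser of `F`, and the hypothesis says exactly that it lies in the cone.
-/

open RCLike

section CompleteSquare

variable {𝕜 E : Type*} [RCLike 𝕜] [SeminormedAddCommGroup E] [InnerProductSpace 𝕜 E]

theorem re_inner_add_half_mul_norm_sq {c : ℝ} (hc : c ≠ 0) (a x : E) :
    re (inner 𝕜 a x) + c / 2 * ‖x‖ ^ 2 =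
      c / 2 * ‖x + ((c⁻¹ : ℝ) : 𝕜) • a‖ ^ 2 - ‖a‖ ^ 2 / (2 * c) := by
  rw [norm_add_sq (𝕜 := 𝕜), inner_smul_real_right, norm_smul, real_smul_eq_coe_mul,
    re_ofReal_mul, ← inner_conj_symm, conj_re, norm_ofReal, abs_inv]
  field_simp
  rw [sq_abs]
  ring

theorem re_inner_add_half_mul_norm_sq_le {c : ℝ} (hc : 0 < c) (a x : E) :
    re (inner 𝕜 a (-((c⁻¹ : ℝ) : 𝕜) • a)) + c / 2 * ‖-((c⁻¹ : ℝ) : 𝕜) • a‖ ^ 2 ≤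
      re (inner 𝕜 a x) + c / 2 * ‖x‖ ^ 2 := by
  rw [re_inner_add_half_mul_norm_sq hc.ne', re_inner_add_half_mul_norm_sq hc.ne', neg_smul,
    neg_add_cancel, norm_zero]
  have := sq_nonneg ‖x + ((c⁻¹ : ℝ) : 𝕜) • a‖
  nlinarith

end CompleteSquare

theorem mul_add_half_mul_sq_le {c : ℝ} (hc : 0 < c) (a x : ℝ) :
    a * (-c⁻¹ * a) + c / 2 * (-c⁻¹ * a) ^ 2 ≤ a * x + c / 2 * x ^ 2 := by
  simpa [inner_apply, mul_comm a, abs_of_pos hc, mul_pow, sq_abs] using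
    re_inner_add_half_mul_norm_sq_le (𝕜 := ℝ) hc a x

theorem stmt8_general (K : ℕ) (γ c : ℝ) (hc : 0 < c)
    (b0 ψ0 : ℝ) (b' ψ' : EuclideanSpace ℂ (Fin K))
    (F : ℝ × EuclideanSpace ℂ (Fin K) → ℝ)
    (hF : ∀ (t : ℝ) (v : EuclideanSpace ℂ (Fin K)),
      F (t, v) = ψ0 * (t - b0) + (inner ℂ ψ' (v - b') : ℂ).re +
        c / 2 * ((t - b0) ^ 2 + ‖v - b'‖ ^ 2))
    (C : Set (ℝ × EuclideanSpace ℂ (Fin K)))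
    (hC : C = {q : ℝ × EuclideanSpace ℂ (Fin K) | ‖q.2‖ ≤ q.1 / Real.sqrt γ})
    (h : ‖c • b' - ψ'‖ ≤ (c * b0 - ψ0) / Real.sqrt γ) :
    ((c * b0 - ψ0) / c, c⁻¹ • (c • b' - ψ')) ∈ C ∧
      ∀ q ∈ C, F ((c * b0 - ψ0) / c, c⁻¹ • (c • b' - ψ')) ≤ F q := by
  subst hC
  refine ⟨?_, ?_⟩
  · calc ‖c⁻¹ • (c • b' - ψ')‖ = c⁻¹ * ‖c • b' - ψ'‖ := by
          rw [norm_smul, Real.norm_of_nonneg (inv_nonneg.2 hc.le)]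
      _ ≤ c⁻¹ * ((c * b0 - ψ0) / Real.sqrt γ) := by gcongr
      _ = (c * b0 - ψ0) / c / Real.sqrt γ := by ring
  · rintro ⟨t, v⟩ -
    have ht : (c * b0 - ψ0) / c - b0 = -c⁻¹ * ψ0 := by field_simp; ring
    have hv : c⁻¹ • (c • b' - ψ') - b' = -((c⁻¹ : ℝ) : ℂ) • ψ' := by
      rw [smul_sub, smul_smul, inv_mul_cancel₀ hc.ne', one_smul, ← Complex.coe_smul]
      module
    have hscalar := mul_add_half_mul_sq_le hc ψ0 (t - b0)
    have hvector := re_inner_add_half_mul_norm_sq_le (𝕜 := ℂ) hc ψ' (v - b')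
    rw [hF, hF, ht, hv]
    simp only [re_to_complex, RCLike.ofReal_eq_complex_ofReal] at hvector
    linarith

theorem stmt8 (K : ℕ) (hK : 0 < K) (γ c : ℝ) (hγ : 0 < γ) (hc : 0 < c)
    (b0 ψ0 : ℝ) (b' ψ' : EuclideanSpace ℂ (Fin K))
    (F : ℝ × EuclideanSpace ℂ (Fin K) → ℝ)
    (hF : ∀ (t : ℝ) (v : EuclideanSpace ℂ (Fin K)),
      F (t, v) = ψ0 * (t - b0) + (inner ℂ ψ' (v - b') : ℂ).re +
        c / 2 * ((t - b0) ^ 2 + ‖v - b'‖ ^ 2))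
    (C : Set (ℝ × EuclideanSpace ℂ (Fin K)))
    (hC : C = {q : ℝ × EuclideanSpace ℂ (Fin K) | ‖q.2‖ ≤ q.1 / Real.sqrt γ})
    (h : ‖c • b' - ψ'‖ ≤ (c * b0 - ψ0) / Real.sqrt γ) :
    ((c * b0 - ψ0) / c, c⁻¹ • (c • b' - ψ')) ∈ C ∧
      ∀ q ∈ C, F ((c * b0 - ψ0) / c, c⁻¹ • (c • b' - ψ')) ≤ F q :=
  stmt8_general K γ c hc b0 ψ0 b' ψ' F hF C hC h
end

section
/- Let K be a positive integer, γ > 0 and c > 0 real numbers, b₀, ψ₀ ∈ ℝ, and b', ψ' ∈ EuclideanSpace ℂ (Fin K). Define F : ℝ × EuclideanSpace ℂ (Fin K) → ℝ by F(t, v) = ψ₀·(t − b₀) + Re ⟪ψ', v − b'⟫ + (c/2)·((t − b₀)² + ‖v − b'‖²), and the second-order cone C = {(t, v) : ‖v‖ ≤ t / Real.sqrt γ}. Set A = c·b₀ − ψ₀ and B = ‖c • b' − ψ'‖, and assume B > A / Real.sqrt γ and B + Real.sqrt γ · A > 0. Define ε = (γ·B − Real.sqrt γ · A)/(1 + γ).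 Then ε > 0, B − ε > 0, and the point (t*, v*) with t* = (A + ε / Real.sqrt γ)/c and v* = ((B − ε)/(c·B)) • (c • b' − ψ') lies on the boundary of the cone (‖v*‖ = t* / Real.sqrt γ) and satisfies F(t*, v*) ≤ F(t, v) for every (t, v) ∈ C. -/
/-! The objective is a quadratic with Hessian `c • id`, so it equals its value at `(t*, v*)`, plus
the pairing with its gradient there, plus `c / 2` times the squared distance. The gradient at
`(t*, v*)` is `(ε / √γ, -(ε / B) • (c • b' - ψ'))`. Since `v*` is a nonnegative multiple of
`c • b' - ψ'` on the boundary of the cone, Cauchy–Schwarz makes the pairing nonnegative on the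
cone: these are the KKT conditions with multiplier `ε`. -/

open RCLike
open scoped InnerProductSpace

/-- The multiplier `ε` of the cone constraint, written with `s = √γ`. -/
noncomputable def coneMultiplier (s A B : ℝ) : ℝ := (s ^ 2 * B - s * A) / (1 + s ^ 2)

lemma coneMultiplier_pos {s A B : ℝ} (hs : 0 < s) (hA : A < B * s) :
    0 < coneMultiplier s A B := by
  unfold coneMultiplier
  apply div_pos <;> nlinarith

lemma coneMultiplier_lt {s A B : ℝ} (hB : 0 < B + s * A) : coneMultiplier s A B < B := by
  rw [coneMultiplier, div_lt_iff₀ (by positivity)]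
  linarith

lemma add_coneMultiplier_div_div {s A B : ℝ} (hs : 0 < s) :
    (A + coneMultiplier s A B / s) / s = B - coneMultiplier s A B := by
  have : 0 < 1 + s ^ 2 := by positivity
  rw [coneMultiplier]
  field_simp
  ring

variable {𝕜 E : Type*} [RCLike 𝕜] [NormedAddCommGroup E] [InnerProductSpace 𝕜 E]
  [Module ℝ E] [IsScalarTower ℝ 𝕜 E]

lemma re_inner_add_norm_sq_eq (p b x y : E) (c : ℝ) :
    re ⟪p, x - b⟫_𝕜 + c / 2 * ‖x - b‖ ^ 2 =
      re ⟪p, y - b⟫_𝕜 + c / 2 * ‖y - b‖ ^ 2 + re ⟪p + c • (y - b), x - y⟫_𝕜 +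
        c / 2 * ‖x - y‖ ^ 2 := by
  have hsplit : x - b = (x - y) + (y - b) := by abel
  rw [hsplit, norm_add_sq (𝕜 := 𝕜), inner_add_right, inner_add_left,
    real_smul_eq_coe_smul (K := 𝕜), inner_smul_real_left, map_add, map_add, smul_re,
    inner_re_symm (𝕜 := 𝕜) (y - b)]
  ring

/-- `(ε / s, -(ε / ‖w‖) • w)` lies in the dual of the cone `‖v‖ ≤ t / s` and is orthogonal to its
boundary point `(t', r • w)`. -/
lemma re_inner_sub_le_of_norm_le {s ε r t t' : ℝ} {v w : E} (hs : 0 < s) (hε : 0 ≤ ε)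
    (hr : 0 ≤ r) (hv : ‖v‖ ≤ t / s) (hrw : ‖r • w‖ = t' / s) :
    ε / ‖w‖ * re ⟪w, v - r • w⟫_𝕜 ≤ ε / s * (t - t') := by
  rcases eq_or_ne w 0 with rfl | hw
  · rw [smul_zero, norm_zero, eq_comm, div_eq_zero_iff, or_iff_left hs.ne'] at hrw
    have ht : 0 ≤ t / s := (norm_nonneg v).trans hv
    rw [inner_zero_left, map_zero, mul_zero, hrw, sub_zero, div_mul_eq_mul_div, mul_div_assoc]
    exact mul_nonneg hε ht
  have hw : 0 < ‖w‖ := norm_pos_iff.2 hw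
  have hinner : re ⟪w, r • w⟫_𝕜 = ‖w‖ * ‖r • w‖ := by
    rw [real_smul_eq_coe_smul (K := 𝕜), inner_smul_real_right, smul_re, inner_self_eq_norm_sq,
      norm_smul, norm_ofReal, abs_of_nonneg hr]
    ring
  have hcs : re ⟪w, v⟫_𝕜 ≤ ‖w‖ * (t / s) :=
    (re_inner_le_norm w v).trans (mul_le_mul_of_nonneg_left hv hw.le)
  calc ε / ‖w‖ * re ⟪w, v - r • w⟫_𝕜
      = ε / ‖w‖ * (re ⟪w, v⟫_𝕜 - ‖w‖ * (t' / s)) := by rw [inner_sub_right, map_sub, hinner, hrw]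
    _ ≤ ε / ‖w‖ * (‖w‖ * (t / s) - ‖w‖ * (t' / s)) := by gcongr
    _ = ε / s * (t - t') := by field_simp

theorem stmt9_general (K : ℕ) (γ c : ℝ) (hγ : 0 < γ) (hc : 0 < c)
    (b0 ψ0 : ℝ) (b' ψ' : EuclideanSpace ℂ (Fin K))
    (F : ℝ × EuclideanSpace ℂ (Fin K) → ℝ)
    (hF : ∀ (t : ℝ) (v : EuclideanSpace ℂ (Fin K)),
      F (t, v) = ψ0 * (t - b0) + (inner ℂ ψ' (v - b') : ℂ).re +
        c / 2 * ((t - b0) ^ 2 + ‖v - b'‖ ^ 2))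
    (C : Set (ℝ × EuclideanSpace ℂ (Fin K)))
    (hC : C = {q : ℝ × EuclideanSpace ℂ (Fin K) | ‖q.2‖ ≤ q.1 / Real.sqrt γ})
    (A B : ℝ) (hA : A = c * b0 - ψ0) (hB : B = ‖c • b' - ψ'‖)
    (h1 : B > A / Real.sqrt γ) (h2 : B + Real.sqrt γ * A > 0)
    (ε : ℝ) (hε : ε = (γ * B - Real.sqrt γ * A) / (1 + γ))
    (tstar : ℝ) (htstar : tstar = (A + ε / Real.sqrt γ) / c)
    (vstar : EuclideanSpace ℂ (Fin K))
    (hvstar : vstar = ((B - ε) / (c * B)) • (c • b' - ψ')) :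
    0 < ε ∧ 0 < B - ε ∧ ‖vstar‖ = tstar / Real.sqrt γ ∧
      ∀ q ∈ C, F (tstar, vstar) ≤ F q := by
  have hs : 0 < Real.sqrt γ := Real.sqrt_pos.2 hγ
  replace hε : ε = coneMultiplier √γ A B := by rwa [coneMultiplier, Real.sq_sqrt hγ.le]
  have hεpos : 0 < ε := hε ▸ coneMultiplier_pos hs ((div_lt_iff₀ hs).1 h1)
  have hεB : ε < B := hε ▸ coneMultiplier_lt h2
  have hBpos : 0 < B := hεpos.trans hεB
  have hvnorm : ‖vstar‖ = tstar / Real.sqrt γ := by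
    rw [hvstar, norm_smul, ← hB, Real.norm_of_nonneg (by positivity), htstar, div_right_comm,
      hε, add_coneMultiplier_div_div hs]
    field_simp
  refine ⟨hεpos, sub_pos.2 hεB, hvnorm, ?_⟩
  rintro ⟨t, v⟩ hq
  rw [hC] at hq
  have hgrad_t : ψ0 + c * (tstar - b0) = ε / Real.sqrt γ := by
    rw [htstar, hA]; field_simp; ring
  have hgrad_v : ψ' + c • (vstar - b') = (-(ε / B)) • (c • b' - ψ') := by
    rw [hvstar, smul_sub c, smul_smul, show c * ((B - ε) / (c * B)) = 1 - ε / B by field_simp]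
    module
  have hcone := re_inner_sub_le_of_norm_le (𝕜 := ℂ) hs hεpos.le (by positivity) hq
    (hvstar ▸ hvnorm)
  rw [← hvstar, ← hB] at hcone
  have hexpand := re_inner_add_norm_sq_eq (𝕜 := ℂ) ψ' b' v vstar c
  rw [hgrad_v, real_smul_eq_coe_smul (K := ℂ), inner_smul_real_left, smul_re] at hexpand
  simp only [RCLike.re_to_complex] at hexpand hcone
  have hscalar : ψ0 * (t - b0) + c / 2 * (t - b0) ^ 2 = ψ0 * (tstar - b0) +
      c / 2 * (tstar - b0) ^ 2 + ε / √γ * (t - tstar) + c / 2 * (t - tstar) ^ 2 := by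
    rw [← hgrad_t]; ring
  rw [hF, hF]
  nlinarith [sq_nonneg (t - tstar), sq_nonneg ‖v - vstar‖]

theorem stmt9 (K : ℕ) (hK : 0 < K) (γ c : ℝ) (hγ : 0 < γ) (hc : 0 < c)
    (b0 ψ0 : ℝ) (b' ψ' : EuclideanSpace ℂ (Fin K))
    (F : ℝ × EuclideanSpace ℂ (Fin K) → ℝ)
    (hF : ∀ (t : ℝ) (v : EuclideanSpace ℂ (Fin K)),
      F (t, v) = ψ0 * (t - b0) + (inner ℂ ψ' (v - b') : ℂ).re +
        c / 2 * ((t - b0) ^ 2 + ‖v - b'‖ ^ 2))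
    (C : Set (ℝ × EuclideanSpace ℂ (Fin K)))
    (hC : C = {q : ℝ × EuclideanSpace ℂ (Fin K) | ‖q.2‖ ≤ q.1 / Real.sqrt γ})
    (A B : ℝ) (hA : A = c * b0 - ψ0) (hB : B = ‖c • b' - ψ'‖)
    (h1 : B > A / Real.sqrt γ) (h2 : B + Real.sqrt γ * A > 0)
    (ε : ℝ) (hε : ε = (γ * B - Real.sqrt γ * A) / (1 + γ))
    (tstar : ℝ) (htstar : tstar = (A + ε / Real.sqrt γ) / c)
    (vstar : EuclideanSpace ℂ (Fin K))
    (hvstar : vstar = ((B - ε) / (c * B)) • (c • b' - ψ')) :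
    0 < ε ∧ 0 < B - ε ∧ ‖vstar‖ = tstar / Real.sqrt γ ∧
      ∀ q ∈ C, F (tstar, vstar) ≤ F q :=
  stmt9_general K γ c hγ hc b0 ψ0 b' ψ' F hF C hC A B hA hB h1 h2 ε hε tstar htstar vstar hvstar
end
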